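/- arXiv:2412.06541 — 2 statements merged into one kernel-verified Lean document; each statement's English description precedes it below -/
import Mathlib

section
/- The Disk Area Mechanism satisfies ε-local differential privacy: for any two inputs v₁, v₂ in the unit square and any measurable output set S, Pr[DAM(v₁) ∈ S] ≤ e^ε · Pr[DAM(v₂) ∈ S]. -/
open MeasureTheory Real

/-- The Disk Area Mechanism satisfies `ε`-local differential privacy: for any
two inputs in the unit square and any measurable set `S` of outputs (contained
in the rounded-square output domain), `Pr[DAM(v₁) ∈ S] ≤ e^ε · Pr[DAM(v₂) ∈ S]`. -/
theorem stmt6 (ε b : ℝ) (hε : 0 < ε) (hb : 0 < b)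
    (p q : ℝ)
    (hp : p = Real.exp ε / (Real.pi * b ^ 2 * Real.exp ε + 4 * b + 1))
    (hq : q = 1 / (Real.pi * b ^ 2 * Real.exp ε + 4 * b + 1))
    (M : EuclideanSpace ℝ (Fin 2) → EuclideanSpace ℝ (Fin 2) → ℝ)
    (hM : ∀ v x, M v x = if ‖x - v‖ ≤ b then p else q)
    (Out : Set (EuclideanSpace ℝ (Fin 2)))
    (hOut : Out = {x | ∃ w : EuclideanSpace ℝ (Fin 2),
      (∀ i, w i ∈ Set.Icc (0 : ℝ) 1) ∧ ‖x - w‖ ≤ b})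
    (v₁ v₂ : EuclideanSpace ℝ (Fin 2))
    (hv₁ : ∀ i, v₁ i ∈ Set.Icc (0 : ℝ) 1) (hv₂ : ∀ i, v₂ i ∈ Set.Icc (0 : ℝ) 1)
    (S : Set (EuclideanSpace ℝ (Fin 2))) (hS : MeasurableSet S) (hSO : S ⊆ Out) :
    ∫⁻ x in S, ENNReal.ofReal (M v₁ x) ∂volume
      ≤ ENNReal.ofReal (Real.exp ε) * ∫⁻ x in S, ENNReal.ofReal (M v₂ x) ∂volume := by
  have hden : 0 < Real.pi * b ^ 2 * Real.exp ε + 4 * b + 1 := by positivity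
  have hq0 : 0 < q := by rw [hq]; positivity
  have hp0 : 0 < p := by rw [hp]; positivity
  have hpq : p = Real.exp ε * q := by rw [hp, hq]; ring
  have h1 : (1:ℝ) ≤ Real.exp ε := Real.one_le_exp hε.le
  calc ∫⁻ x in S, ENNReal.ofReal (M v₁ x) ∂volume
      ≤ ∫⁻ x in S, ENNReal.ofReal (Real.exp ε * M v₂ x) ∂volume := by
        apply lintegral_mono; intro x
        apply ENNReal.ofReal_le_ofReal
        rw [hM, hM]
        split_ifs with h1' h2'
        · nlinarith
        · exact hpq.le
        · nlinarith
        · nlinarith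
    _ = ENNReal.ofReal (Real.exp ε) * ∫⁻ x in S, ENNReal.ofReal (M v₂ x) ∂volume := by
        simp_rw [ENNReal.ofReal_mul (Real.exp_pos ε).le]
        rw [lintegral_const_mul']
        exact ENNReal.ofReal_ne_top
end

section
/- For the Disk Area Mechanism on a square input domain with side length L, the mutual-information upper bound g(b) = log((πb² + 4Lb + L²)/(πb²e^ε + 4Lb + L²)) + πb²e^ε·ε·log e/(πb²e^ε + 4Lb + L²) is maximized at b* = L·(2m₂ + √(4m₂² + πe^ε m₁ m₂))/(πe^ε m₁), where m₁ = e^ε − 1 − ε and m₂ = 1 − e^ε + εe^ε; equivalently, the optimal radius scales linearly in the side length L. -/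
open Real

/-- For the Disk Area Mechanism on a square input domain of side `L`, the
mutual-information upper bound
`g(b) = log₂((πb²+4Lb+L²)/(πb²e^ε+4Lb+L²)) + πb²e^ε·ε·log₂e/(πb²e^ε+4Lb+L²)`
is maximized over `b > 0` at
`b* = L·(2m₂ + √(4m₂² + πe^ε m₁ m₂))/(πe^ε m₁)`; in particular the optimal
radius scales linearly in `L`. -/
theorem stmt17 (ε L : ℝ) (hε : 0 < ε) (hL : 0 < L)
    (m₁ m₂ : ℝ) (hm₁ : m₁ = Real.exp ε - 1 - ε)
    (hm₂ : m₂ = 1 - Real.exp ε + ε * Real.exp ε)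
    (g : ℝ → ℝ)
    (hg : ∀ b : ℝ, g b =
      Real.logb 2 ((Real.pi * b ^ 2 + 4 * L * b + L ^ 2) /
          (Real.pi * b ^ 2 * Real.exp ε + 4 * L * b + L ^ 2)) +
        Real.pi * b ^ 2 * Real.exp ε * ε * Real.logb 2 (Real.exp 1) /
          (Real.pi * b ^ 2 * Real.exp ε + 4 * L * b + L ^ 2))
    (bstar : ℝ)
    (hbstar : bstar = L * (2 * m₂ + Real.sqrt (4 * m₂ ^ 2 +
        Real.pi * Real.exp ε * m₁ * m₂)) / (Real.pi * Real.exp ε * m₁)) :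
    IsMaxOn g (Set.Ioi 0) bstar := by
  set E := Real.exp ε with hE
  have hE1 : 1 < E := by
    rw [hE]; calc (1:ℝ) < 1 + ε := by linarith
    _ ≤ Real.exp ε := by nlinarith [Real.add_one_le_exp ε]
  have hEpos : 0 < E := by linarith
  have hm₁pos : 0 < m₁ := by
    rw [hm₁]; have := Real.add_one_lt_exp (ne_of_gt hε); linarith
  have hm₂pos : 0 < m₂ := by
    have h := Real.add_one_lt_exp (x := -ε) (by linarith)
    have : (1 - ε) * E < 1 := by
      have hE' : Real.exp (-ε) * E = 1 := by
        rw [hE, ← Real.exp_add]; simp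
      nlinarith [Real.exp_pos (-ε)]
    rw [hm₂]; nlinarith
  have hπ := Real.pi_pos
  have hApos : 0 < Real.pi * E * m₁ := by positivity
  set S := Real.sqrt (4 * m₂ ^ 2 + Real.pi * E * m₁ * m₂) with hS
  have hSsq : S ^ 2 = 4 * m₂ ^ 2 + Real.pi * E * m₁ * m₂ := by
    rw [hS]; exact Real.sq_sqrt (by positivity)
  have hbpos : 0 < bstar := by
    have hSpos : 0 < S := by
      rw [hS]; exact Real.sqrt_pos.mpr (by positivity)
    rw [hbstar]; positivity
  have hb2 : bstar * (Real.pi * E * m₁) = L * (2 * m₂ + S) := by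
    rw [hbstar]; field_simp
  clear_value S
  -- b* satisfies the quadratic
  have hquad : Real.pi * E * m₁ * bstar ^ 2 = m₂ * (4 * L * bstar + L ^ 2) := by
    have key : (Real.pi * E * m₁) * (Real.pi * E * m₁ * bstar ^ 2
        - m₂ * (4 * L * bstar + L ^ 2)) = 0 := by
      linear_combination (bstar * (Real.pi * E * m₁) + L * (2 * m₂ + S)
        - 4 * L * m₂) * hb2 + L ^ 2 * hSsq
    rcases mul_eq_zero.mp key with h | h
    · exact absurd h (ne_of_gt hApos)
    · linarith
  -- the stationarity identity:  ε E N* = (E-1) D*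
  have hkey : ε * (Real.pi * bstar ^ 2 + 4 * L * bstar + L ^ 2) * E
      = (E - 1) * (Real.pi * bstar ^ 2 * E + 4 * L * bstar + L ^ 2) := by
    rw [hm₁, hm₂] at hquad
    linear_combination -hquad
  have hlog2 : 0 < Real.log 2 := Real.log_pos (by norm_num)
  have hlbe : Real.logb 2 (Real.exp 1) = 1 / Real.log 2 := by
    rw [Real.logb, Real.log_exp]
  rw [isMaxOn_iff]
  intro b hb
  have hbgt : 0 < b := hb
  rw [hg b, hg bstar, hlbe]
  set X := Real.pi * b ^ 2 with hX
  set Xs := Real.pi * bstar ^ 2 with hXs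
  have hXpos : 0 < X := by rw [hX]; positivity
  have hXspos : 0 < Xs := by rw [hXs]; positivity
  set Db := X * E + 4 * L * b + L ^ 2 with hDb
  set Nb := X + 4 * L * b + L ^ 2 with hNb
  set Ds := Xs * E + 4 * L * bstar + L ^ 2 with hDs
  set Ns := Xs + 4 * L * bstar + L ^ 2 with hNs
  have hDbpos : 0 < Db := by rw [hDb]; positivity
  have hNbpos : 0 < Nb := by rw [hNb]; positivity
  have hDspos : 0 < Ds := by rw [hDs]; positivity
  have hNspos : 0 < Ns := by rw [hNs]; positivity
  have e1 : Nb * Ds - Db * Ns = (E - 1) * (Xs * Db - X * Ds) := by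
    rw [hNb, hDb, hNs, hDs]; ring
  clear_value Db Nb Ds Ns E X Xs
  -- main inequality without the log 2 denominators
  have main : Real.log (Nb / Db) + ε * (X * E / Db)
      ≤ Real.log (Ns / Ds) + ε * (Xs * E / Ds) := by
    set t : ℝ := (Nb * Ds) / (Db * Ns) with ht
    have htpos : 0 < t := by positivity
    have h1 : Real.log t ≤ t - 1 := Real.log_le_sub_one_of_pos htpos
    have h2 : t - 1 = ε * (Xs * E / Ds) - ε * (X * E / Db) := by
      rw [ht]
      field_simp
      linear_combination Ds * e1 - (Xs * Db - X * Ds) * hkey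
    have h3 : Real.log (Nb / Db) = Real.log t + Real.log (Ns / Ds) := by
      rw [ht, Real.log_div (by positivity) (by positivity),
        Real.log_div (by positivity) (by positivity),
        Real.log_mul (by positivity) (by positivity),
        Real.log_mul (by positivity) (by positivity),
        Real.log_div (by positivity) (by positivity)]
      ring
    rw [h3]
    linarith
  have lhs_eq : Real.logb 2 (Nb / Db) + X * E * ε * (1 / Real.log 2) / Db
      = (Real.log (Nb / Db) + ε * (X * E / Db)) / Real.log 2 := by
    rw [Real.logb]; field_simp
  have rhs_eq : Real.logb 2 (Ns / Ds) + Xs * E * ε * (1 / Real.log 2) / Ds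
      = (Real.log (Ns / Ds) + ε * (Xs * E / Ds)) / Real.log 2 := by
    rw [Real.logb]; field_simp
  rw [lhs_eq, rhs_eq]
  exact div_le_div_of_nonneg_right main hlog2.le
end
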